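/- There is a constant C(k) depending only on k such that for every h > 0 and every polynomial w of degree ≤ k on [0,h], |w(0)|² ≤ C(k) h^{−1} ∫₀ʰ w(s)² ds. -/

import Mathlib

open Polynomial intervalIntegral MeasureTheory Finset

noncomputable def Qform (k : ℕ) (a : Fin (k+1) → ℝ) : ℝ :=
  ∫ s in (0:ℝ)..1, (∑ i : Fin (k+1), a i * s ^ (i:ℕ)) ^ 2

lemma Qform_eq (k : ℕ) (a : Fin (k+1) → ℝ) :
    Qform k a = ∑ i : Fin (k+1), ∑ j : Fin (k+1),
      a i * a j * (1 / ((i:ℕ) + (j:ℕ) + 1)) := by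
  unfold Qform
  have h1 : ∀ s : ℝ, (∑ i : Fin (k+1), a i * s ^ (i:ℕ)) ^ 2
      = ∑ i : Fin (k+1), ∑ j : Fin (k+1), a i * a j * s ^ ((i:ℕ) + (j:ℕ)) := by
    intro s
    rw [sq, Finset.sum_mul_sum]
    congr 1; ext i; congr 1; ext j; ring
  simp_rw [h1]
  rw [intervalIntegral.integral_finset_sum]
  · refine Finset.sum_congr rfl fun i _ => ?_
    rw [intervalIntegral.integral_finset_sum]
    · refine Finset.sum_congr rfl fun j _ => ?_
      rw [intervalIntegral.integral_const_mul, integral_pow]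
      push_cast
      ring
    · intro j _
      exact (Continuous.intervalIntegrable (by continuity) _ _)
  · intro i _
    exact (Continuous.intervalIntegrable (by continuity) _ _)

lemma Qform_continuous (k : ℕ) : Continuous (Qform k) := by
  have : Qform k = fun a : Fin (k+1) → ℝ => ∑ i : Fin (k+1), ∑ j : Fin (k+1),
      a i * a j * (1 / (((i:ℕ):ℝ) + ((j:ℕ):ℝ) + 1)) := funext fun a => by
    rw [Qform_eq]
  rw [this]
  continuity

lemma Qform_smul (k : ℕ) (c : ℝ) (a : Fin (k+1) → ℝ) :
    Qform k (c • a) = c ^ 2 * Qform k a := by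
  simp only [Qform_eq, Pi.smul_apply, smul_eq_mul]
  rw [Finset.mul_sum]
  refine Finset.sum_congr rfl fun i _ => ?_
  rw [Finset.mul_sum]
  refine Finset.sum_congr rfl fun j _ => ?_
  ring

lemma Qform_pos (k : ℕ) {a : Fin (k+1) → ℝ} (ha : a ≠ 0) : 0 < Qform k a := by
  set p : Polynomial ℝ := ∑ i : Fin (k+1), Polynomial.C (a i) * Polynomial.X ^ (i:ℕ) with hp
  have hpe : ∀ s : ℝ, p.eval s = ∑ i : Fin (k+1), a i * s ^ (i:ℕ) := by
    intro s; simp [hp, Polynomial.eval_finset_sum]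
  have hpne : p ≠ 0 := by
    obtain ⟨i, hi⟩ := Function.ne_iff.mp ha
    intro h0
    apply hi
    have : p.coeff (i:ℕ) = a i := by
      rw [hp, Polynomial.finset_sum_coeff]
      rw [Finset.sum_eq_single i]
      · simp
      · intro j _ hj
        simp only [Polynomial.coeff_C_mul, Polynomial.coeff_X_pow]
        rw [if_neg (by simpa [Fin.val_eq_val] using (Ne.symm hj)), mul_zero]
      · simp
    rw [h0] at this
    simpa using this.symm
  have hnn : 0 ≤ Qform k a := by
    apply intervalIntegral.integral_nonneg (by norm_num)
    intro s _; positivity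
  rcases hnn.lt_or_eq with h | h
  · exact h
  exfalso
  -- integral zero: derive a.e. vanishing
  have hInt : ∫ s in Set.Ioc (0:ℝ) 1, (p.eval s) ^ 2 = 0 := by
    have := h.symm
    unfold Qform at this
    rw [intervalIntegral.integral_of_le (by norm_num)] at this
    simp_rw [← hpe] at this
    exact this
  have hae : (fun s => (p.eval s) ^ 2) =ᶠ[ae (volume.restrict (Set.Ioc (0:ℝ) 1))] 0 := by
    rw [← MeasureTheory.integral_eq_zero_iff_of_nonneg]
    · exact hInt
    · intro s; positivity
    · exact (Continuous.integrableOn_Ioc (by continuity))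
  have hae2 : ∀ᵐ s ∂(volume : Measure ℝ), s ∈ Set.Ioc (0:ℝ) 1 → p.IsRoot s := by
    have := (ae_restrict_iff' measurableSet_Ioc).mp hae
    filter_upwards [this] with s hs hsmem
    have := hs hsmem
    simpa [Polynomial.IsRoot] using pow_eq_zero_iff (n := 2) (by norm_num) |>.mp this
  have hsub : Set.Ioc (0:ℝ) 1 ⊆ {s | ¬ (s ∈ Set.Ioc (0:ℝ) 1 → p.IsRoot s)} ∪ {s | p.IsRoot s} := by
    intro s hs
    by_cases hr : p.IsRoot s
    · exact Or.inr hr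
    · exact Or.inl (fun himp => hr (himp hs))
  have h1 : (volume : Measure ℝ) {s | ¬ (s ∈ Set.Ioc (0:ℝ) 1 → p.IsRoot s)} = 0 := hae2
  have h2 : (volume : Measure ℝ) {s | p.IsRoot s} = 0 :=
    (Polynomial.finite_setOf_isRoot hpne).measure_zero _
  have : (volume : Measure ℝ) (Set.Ioc (0:ℝ) 1) = 0 := by
    refine le_antisymm ?_ zero_le
    calc volume (Set.Ioc (0:ℝ) 1) ≤ _ := measure_mono hsub
    _ ≤ _ := measure_union_le _ _
    _ = 0 := by rw [h1, h2, add_zero]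
  simp [Real.volume_Ioc] at this


lemma Qform_def (k : ℕ) (a : Fin (k+1) → ℝ) : Qform k a =
  ∫ s in (0:ℝ)..1, (∑ i : Fin (k+1), a i * s ^ (i:ℕ)) ^ 2 := rfl

lemma core (k : ℕ) : ∃ C > 0, ∀ a : Fin (k+1) → ℝ,
    (a 0) ^ 2 ≤ C * Qform k a := by
  have hco : IsCompact (Metric.sphere (0 : Fin (k+1) → ℝ) 1) := isCompact_sphere _ _
  have hne : (Metric.sphere (0 : Fin (k+1) → ℝ) 1).Nonempty :=
    NormedSpace.sphere_nonempty.mpr zero_le_one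
  obtain ⟨a₀, ha₀S, hmin'⟩ := hco.exists_isMinOn hne (Qform_continuous k).continuousOn
  have hmin : ∀ b ∈ Metric.sphere (0 : Fin (k+1) → ℝ) 1, Qform k a₀ ≤ Qform k b :=
    fun b hb => hmin' hb
  have ha₀ : a₀ ≠ 0 := by
    intro h
    rw [h] at ha₀S
    simp at ha₀S
  have hm : 0 < Qform k a₀ := Qform_pos k ha₀
  refine ⟨(Qform k a₀)⁻¹, by positivity, fun a => ?_⟩
  by_cases haz : a = 0
  · subst haz
    have : Qform k (0 : Fin (k+1) → ℝ) = 0 := by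
      have := Qform_smul k 0 0
      simpa using this
    simp [this]
  · have hn : (0:ℝ) < ‖a‖ := norm_pos_iff.mpr haz
    set b := ‖a‖⁻¹ • a with hb
    have hbS : b ∈ Metric.sphere (0 : Fin (k+1) → ℝ) 1 := by
      simp [hb, norm_smul, abs_of_pos (inv_pos.mpr hn), inv_mul_cancel₀ hn.ne']
    have hQa : Qform k a = ‖a‖ ^ 2 * Qform k b := by
      have : a = ‖a‖ • b := by
        rw [hb, smul_smul, mul_inv_cancel₀ hn.ne', one_smul]
      conv_lhs => rw [this, Qform_smul]
    have h1 : (a 0) ^ 2 ≤ ‖a‖ ^ 2 := by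
      have := norm_le_pi_norm a 0
      calc (a 0)^2 = |a 0|^2 := (sq_abs _).symm
      _ ≤ ‖a‖^2 := by
        apply pow_le_pow_left₀ (abs_nonneg _) (by simpa using this)
    have h2 : Qform k a₀ ≤ Qform k b := hmin b hbS
    calc (a 0)^2 ≤ ‖a‖^2 := h1
    _ = (Qform k a₀)⁻¹ * (Qform k a₀ * ‖a‖^2) := by field_simp
    _ ≤ (Qform k a₀)⁻¹ * Qform k a := by
        apply mul_le_mul_of_nonneg_left _ (by positivity)
        rw [hQa]
        calc Qform k a₀ * ‖a‖^2 ≤ Qform k b * ‖a‖^2 := by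
              apply mul_le_mul_of_nonneg_right h2 (by positivity)
        _ = ‖a‖^2 * Qform k b := by ring

theorem discrete_trace_inequality_1d (k : ℕ) :
    ∃ C > 0, ∀ (h : ℝ), 0 < h → ∀ w : Polynomial ℝ, w.natDegree ≤ k →
      (w.eval 0) ^ 2 ≤ C * h⁻¹ * ∫ s in (0:ℝ)..h, (w.eval s) ^ 2 := by
  obtain ⟨C, hC, hbound⟩ := core k
  refine ⟨C, hC, fun h hh w hw => ?_⟩
  set v : Polynomial ℝ := w.comp (Polynomial.C h * Polynomial.X) with hv
  have hvd : v.natDegree ≤ k := by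
    rw [hv, Polynomial.natDegree_comp]
    calc w.natDegree * (Polynomial.C h * Polynomial.X).natDegree
        ≤ w.natDegree * 1 := by
          apply Nat.mul_le_mul_left
          exact (Polynomial.natDegree_C_mul_X h hh.ne').le
    _ ≤ k := by simpa using hw
  have hve : ∀ t : ℝ, v.eval t = w.eval (h * t) := by
    intro t; simp [hv]
  set a : Fin (k+1) → ℝ := fun i => v.coeff (i:ℕ) with ha
  have hsum : ∀ s : ℝ, (∑ i : Fin (k+1), a i * s ^ (i:ℕ)) = v.eval s := by
    intro s
    rw [Polynomial.eval_eq_sum_range' (Nat.lt_succ_of_le hvd)]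
    rw [← Fin.sum_univ_eq_sum_range]
  have ha0 : a 0 = w.eval 0 := by
    have h0 : ((0 : Fin (k+1)) : ℕ) = 0 := rfl
    rw [ha]
    simp only [h0]
    rw [Polynomial.coeff_zero_eq_eval_zero, hve 0, mul_zero]
  have hQ : Qform k a = h⁻¹ * ∫ s in (0:ℝ)..h, (w.eval s) ^ 2 := by
    rw [Qform]
    simp_rw [hsum, hve]
    have := intervalIntegral.integral_comp_mul_left (a := (0:ℝ)) (b := 1)
      (fun s => (w.eval s)^2) hh.ne'
    rw [this]
    simp [smul_eq_mul]
  have := hbound a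
  rw [ha0, hQ] at this
  linarith [this]
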